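/- Let α = (α_n) be a sequence of nonnegative integers with α_n ≤ α_{n+1} and α_n ≤ n for all n, and define Q_α((x_n)) = (φ_{α_n}^n(x_{α_n}))_n. Then Q_α maps Ĵ(Φ) into Ĵ(Φ) boundedly with ‖Q_α(x)‖_J ≤ ‖x‖_J for all x ∈ Ĵ(Φ). -/

import Mathlib

open Filter Topology

/-- Composition `φ_n^m = φ_{m-1} ∘ ⋯ ∘ φ_n : X n →L X m` (junk value for `m < n`). -/
noncomputable def phiTo {X : ℕ → Type*} [∀ n, NormedAddCommGroup (X n)]
    [∀ n, NormedSpace ℝ (X n)] (φ : ∀ n, X n →L[ℝ] X (n + 1)) (n : ℕ) :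
    (m : ℕ) → X n →L[ℝ] X m
  | 0 => 0
  | m + 1 =>
    if h : m + 1 = n then by rw [h]; exact ContinuousLinearMap.id ℝ (X n)
    else (φ m).comp (phiTo φ n m)

open Classical in
/-- `σ(x,S)²`: the sum over consecutive pairs `p < q` of `S` of `‖φ_p^q(x_p) - x_q‖²`. -/
noncomputable def sigma2 {X : ℕ → Type*} [∀ n, NormedAddCommGroup (X n)]
    [∀ n, NormedSpace ℝ (X n)] (φ : ∀ n, X n →L[ℝ] X (n + 1))
    (x : ∀ n, X n) (S : Finset ℕ) : ℝ :=
  ∑ p ∈ S, ∑ q ∈ S,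
    if p < q ∧ ∀ r ∈ S, ¬(p < r ∧ r < q) then ‖phiTo φ p q (x p) - x q‖ ^ 2 else 0

noncomputable def sigmaJ {X : ℕ → Type*} [∀ n, NormedAddCommGroup (X n)]
    [∀ n, NormedSpace ℝ (X n)] (φ : ∀ n, X n →L[ℝ] X (n + 1))
    (x : ∀ n, X n) (S : Finset ℕ) : ℝ :=
  Real.sqrt (sigma2 φ x S)

/-- `ρ(x,S)² = σ(x,S)² + ‖x_{max S}‖²`. -/
noncomputable def rho2 {X : ℕ → Type*} [∀ n, NormedAddCommGroup (X n)]
    [∀ n, NormedSpace ℝ (X n)] (φ : ∀ n, X n →L[ℝ] X (n + 1))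
    (x : ∀ n, X n) (S : Finset ℕ) (hS : S.Nonempty) : ℝ :=
  sigma2 φ x S + ‖x (S.max' hS)‖ ^ 2

noncomputable def rhoJ {X : ℕ → Type*} [∀ n, NormedAddCommGroup (X n)]
    [∀ n, NormedSpace ℝ (X n)] (φ : ∀ n, X n →L[ℝ] X (n + 1))
    (x : ∀ n, X n) (S : Finset ℕ) (hS : S.Nonempty) : ℝ :=
  Real.sqrt (rho2 φ x S hS)

/-- The set of values `ρ(x,S)` over finite nonempty `S ⊆ ℕ`. -/
def rhoSet {X : ℕ → Type*} [∀ n, NormedAddCommGroup (X n)]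
    [∀ n, NormedSpace ℝ (X n)] (φ : ∀ n, X n →L[ℝ] X (n + 1))
    (x : ∀ n, X n) : Set ℝ :=
  {r : ℝ | ∃ (S : Finset ℕ) (hS : S.Nonempty), r = rhoJ φ x S hS}

/-- Membership in `Ĵ(Φ)`: `sup_S ρ(x,S) < ∞`. -/
def memJhat {X : ℕ → Type*} [∀ n, NormedAddCommGroup (X n)]
    [∀ n, NormedSpace ℝ (X n)] (φ : ∀ n, X n →L[ℝ] X (n + 1))
    (x : ∀ n, X n) : Prop :=
  BddAbove (rhoSet φ x)

/-- The norm `‖x‖_J = (1/√2) sup_S ρ(x,S)`. -/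
noncomputable def normJ {X : ℕ → Type*} [∀ n, NormedAddCommGroup (X n)]
    [∀ n, NormedSpace ℝ (X n)] (φ : ∀ n, X n →L[ℝ] X (n + 1))
    (x : ∀ n, X n) : ℝ :=
  (Real.sqrt 2)⁻¹ * sSup (rhoSet φ x)

/-- Membership in `J(Φ)`: member of `Ĵ(Φ)` with `‖x_n‖ → 0`. -/
def memJ {X : ℕ → Type*} [∀ n, NormedAddCommGroup (X n)]
    [∀ n, NormedSpace ℝ (X n)] (φ : ∀ n, X n →L[ℝ] X (n + 1))
    (x : ∀ n, X n) : Prop :=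
  memJhat φ x ∧ Tendsto (fun n => ‖x n‖) atTop (𝓝 0)

open Classical in
/-- The coordinate restriction `P_I`. -/
noncomputable def restrictSeq {X : ℕ → Type*} [∀ n, NormedAddCommGroup (X n)]
    (I : Set ℕ) (x : ∀ n, X n) : ∀ n, X n :=
  fun n => if n ∈ I then x n else 0

/-- The stepping map `Q_α`. -/
noncomputable def stepSeq {X : ℕ → Type*} [∀ n, NormedAddCommGroup (X n)]
    [∀ n, NormedSpace ℝ (X n)] (φ : ∀ n, X n →L[ℝ] X (n + 1))
    (α : ℕ → ℕ) (x : ∀ n, X n) : ∀ n, X n :=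
  fun n => phiTo φ (α n) n (x (α n))

/-
For a finite nonempty `S`, compare `ρ(Q_α x, S)` with `ρ(x, α(S))`. The last terms match up since
`max α(S) = α(max S)` and `φ_{α n}^n` is a contraction. Writing `Q_α x_q - φ_p^q (Q_α x_p)` as
`φ_{α q}^q (x_{α q} - φ_{α p}^{α q} x_{α p})`, an adjacent pair `p < q` of `S` contributes nothing
when `α p = α q`, and otherwise at most the term of the adjacent pair `α p < α q` of `α(S)`; since
`α` is monotone, distinct non-collapsing adjacent pairs of `S` have distinct images. Taking suprema
over `S` gives the claim.
-/

section Order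

variable {α : Type*} {s t : Set α}

theorem upperBounds_subset_of_forall_exists_le [Preorder α] (h : ∀ a ∈ s, ∃ b ∈ t, a ≤ b) :
    upperBounds t ⊆ upperBounds s := fun _ hc a ha =>
  let ⟨_, hb, hab⟩ := h a ha
  hab.trans (hc hb)

theorem csSup_le_csSup_of_forall_exists_le [ConditionallyCompleteLattice α] (ht : BddAbove t)
    (hs : s.Nonempty) (h : ∀ a ∈ s, ∃ b ∈ t, a ≤ b) : sSup s ≤ sSup t :=
  csSup_le hs fun a ha =>
    let ⟨_, hb, hab⟩ := h a ha
    hab.trans (le_csSup ht hb)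

end Order

section AdjacentPairs

variable {ι κ : Type*} [LinearOrder ι] [LinearOrder κ]

def adjacentPairs (S : Finset ι) : Finset (ι × ι) :=
  (S ×ˢ S).filter fun pq => pq.1 < pq.2 ∧ ∀ r ∈ S, ¬(pq.1 < r ∧ r < pq.2)

theorem mem_adjacentPairs {S : Finset ι} {p q : ι} :
    (p, q) ∈ adjacentPairs S ↔ p ∈ S ∧ q ∈ S ∧ p < q ∧ ∀ r ∈ S, ¬(p < r ∧ r < q) := by
  simp [adjacentPairs, and_assoc]

variable {f : ι → κ} {S : Finset ι}

theorem map_mem_adjacentPairs_image (hf : Monotone f) {p q : ι}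
    (hpq : (p, q) ∈ adjacentPairs S) (hlt : f p < f q) :
    (f p, f q) ∈ adjacentPairs (S.image f) := by
  rw [mem_adjacentPairs] at hpq ⊢
  obtain ⟨hp, hq, -, hadj⟩ := hpq
  refine ⟨Finset.mem_image_of_mem f hp, Finset.mem_image_of_mem f hq, hlt, ?_⟩
  rintro _ hfr ⟨hpr, hrq⟩
  obtain ⟨r, hr, rfl⟩ := Finset.mem_image.mp hfr
  exact hadj r hr ⟨hf.reflect_lt hpr, hf.reflect_lt hrq⟩

theorem injOn_map_adjacentPairs (hf : Monotone f) :
    Set.InjOn (Prod.map f f) {pq | pq ∈ adjacentPairs S ∧ f pq.1 < f pq.2} := by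
  rintro ⟨p, q⟩ ⟨hpq, hlt⟩ ⟨p', q'⟩ ⟨hpq', -⟩ heq
  simp only [Prod.map, Prod.mk.injEq] at heq hlt
  rw [mem_adjacentPairs] at hpq hpq'
  obtain ⟨hp, hq, hpq, hadj⟩ := hpq
  obtain ⟨hp', hq', hpq', hadj'⟩ := hpq'
  -- `q` is the successor of `p` in `S`, so `p < p'` would force `f q ≤ f p' = f p`.
  have hpp' : p = p' := by
    by_contra hne
    rcases lt_or_gt_of_ne hne with h | h
    · have hqp' : f q ≤ f p' := hf (not_lt.mp fun h' => hadj p' hp' ⟨h, h'⟩)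
      exact lt_irrefl _ (hlt.trans_le (hqp'.trans_eq heq.1.symm))
    · have hq'p : f q' ≤ f p := hf (not_lt.mp fun h' => hadj' p hp ⟨h, h'⟩)
      exact lt_irrefl _ (hlt.trans_le (heq.2.trans_le hq'p))
  subst hpp'
  obtain h | rfl | h := lt_trichotomy q q'
  · exact absurd ⟨hpq, h⟩ (hadj' q hq)
  · rfl
  · exact absurd ⟨hpq', h⟩ (hadj q' hq')

theorem sum_adjacentPairs_le_sum_adjacentPairs_image (hf : Monotone f) {g : ι × ι → ℝ}
    {G : κ × κ → ℝ} (hG : ∀ uv ∈ adjacentPairs (S.image f), 0 ≤ G uv)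
    (hlt : ∀ pq ∈ adjacentPairs S, f pq.1 < f pq.2 → g pq ≤ G (Prod.map f f pq))
    (heq : ∀ pq ∈ adjacentPairs S, f pq.1 = f pq.2 → g pq ≤ 0) :
    ∑ pq ∈ adjacentPairs S, g pq ≤ ∑ uv ∈ adjacentPairs (S.image f), G uv := by
  classical
  set T := (adjacentPairs S).filter fun pq => f pq.1 < f pq.2
  have hT : T.image (Prod.map f f) ⊆ adjacentPairs (S.image f) := by
    simp only [Finset.image_subset_iff, T, Finset.mem_filter]
    exact fun ⟨p, q⟩ ⟨hpq, h⟩ => map_mem_adjacentPairs_image hf hpq h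
  rw [← Finset.sum_filter_add_sum_filter_not _ fun pq => f pq.1 < f pq.2]
  calc _ ≤ ∑ pq ∈ T, G (Prod.map f f pq) + 0 := by
        refine add_le_add (Finset.sum_le_sum fun pq hpq => ?_)
          (Finset.sum_nonpos fun pq hpq => ?_)
        · rw [Finset.mem_filter] at hpq
          exact hlt pq hpq.1 hpq.2
        · rw [Finset.mem_filter] at hpq
          have hle : f pq.1 ≤ f pq.2 := hf ((mem_adjacentPairs.mp hpq.1).2.2.1.le)
          exact heq pq hpq.1 (hle.antisymm (not_lt.mp hpq.2))
    _ = ∑ uv ∈ T.image (Prod.map f f), G uv := by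
        rw [add_zero, Finset.sum_image fun a ha b hb => injOn_map_adjacentPairs hf
          (by simpa [T] using ha) (by simpa [T] using hb)]
    _ ≤ _ := Finset.sum_le_sum_of_subset_of_nonneg hT fun uv huv _ => hG uv huv

end AdjacentPairs

section ConnectingMaps

variable {X : ℕ → Type*} [∀ n, NormedAddCommGroup (X n)] [∀ n, NormedSpace ℝ (X n)]
  (φ : ∀ n, X n →L[ℝ] X (n + 1))

theorem norm_phiTo_le (hφ : ∀ n, ‖φ n‖ ≤ 1) (n m : ℕ) : ‖phiTo φ n m‖ ≤ 1 := by
  induction m with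
  | zero => simp [phiTo]
  | succ m ih =>
    rw [phiTo]
    split_ifs with h
    · subst h
      exact ContinuousLinearMap.norm_id_le
    · calc ‖(φ m).comp (phiTo φ n m)‖ ≤ ‖φ m‖ * ‖phiTo φ n m‖ := (φ m).opNorm_comp_le _
        _ ≤ 1 := mul_le_one₀ (hφ m) (norm_nonneg _) ih

theorem norm_phiTo_apply_le (hφ : ∀ n, ‖φ n‖ ≤ 1) {n : ℕ} (m : ℕ) (y : X n) :
    ‖phiTo φ n m y‖ ≤ ‖y‖ := by
  simpa using (phiTo φ n m).le_of_opNorm_le (norm_phiTo_le φ hφ n m) y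

-- `phiTo φ 0 0` is the junk value `0`; it is the identity only because `X 0` is trivial.
theorem phiTo_self_apply [Subsingleton (X 0)] (n : ℕ) (y : X n) : phiTo φ n n y = y := by
  cases n with
  | zero => exact Subsingleton.elim _ _
  | succ n => simp [phiTo]

theorem phiTo_succ_of_le {n m : ℕ} (h : n ≤ m) :
    phiTo φ n (m + 1) = (φ m).comp (phiTo φ n m) := by
  rw [phiTo, dif_neg (by omega)]

theorem phiTo_phiTo_apply [Subsingleton (X 0)] {c a b : ℕ} (hca : c ≤ a) (hab : a ≤ b)
    (y : X c) : phiTo φ a b (phiTo φ c a y) = phiTo φ c b y := by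
  induction b, hab using Nat.le_induction with
  | base => exact phiTo_self_apply φ a _
  | succ b hab ih =>
    rw [phiTo_succ_of_le φ hab, phiTo_succ_of_le φ (hca.trans hab),
      ContinuousLinearMap.comp_apply, ContinuousLinearMap.comp_apply, ih]

theorem sigma2_eq_sum_adjacentPairs (x : ∀ n, X n) (S : Finset ℕ) :
    sigma2 φ x S = ∑ pq ∈ adjacentPairs S, ‖phiTo φ pq.1 pq.2 (x pq.1) - x pq.2‖ ^ 2 := by
  rw [sigma2, ← Finset.sum_product', adjacentPairs, Finset.sum_filter]

end ConnectingMaps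

section Stepping

variable {X : ℕ → Type*} [∀ n, NormedAddCommGroup (X n)] [∀ n, NormedSpace ℝ (X n)]
  [Subsingleton (X 0)] {φ : ∀ n, X n →L[ℝ] X (n + 1)} {α : ℕ → ℕ}

theorem phiTo_stepSeq_sub (hα : Monotone α) (hαn : ∀ n, α n ≤ n) (x : ∀ n, X n) {p q : ℕ}
    (hpq : p ≤ q) :
    phiTo φ p q (stepSeq φ α x p) - stepSeq φ α x q
      = phiTo φ (α q) q (phiTo φ (α p) (α q) (x (α p)) - x (α q)) := by
  rw [stepSeq, stepSeq, map_sub, phiTo_phiTo_apply φ (hαn p) hpq,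
    phiTo_phiTo_apply φ (hα hpq) (hαn q)]

variable (hφ : ∀ n, ‖φ n‖ ≤ 1) (hα : Monotone α) (hαn : ∀ n, α n ≤ n) (x : ∀ n, X n)
include hφ hα hαn

theorem sigma2_stepSeq_le (S : Finset ℕ) :
    sigma2 φ (stepSeq φ α x) S ≤ sigma2 φ x (S.image α) := by
  rw [sigma2_eq_sum_adjacentPairs, sigma2_eq_sum_adjacentPairs]
  refine sum_adjacentPairs_le_sum_adjacentPairs_image hα (fun _ _ => by positivity)
    (fun ⟨p, q⟩ hpq _ => ?_) (fun ⟨p, q⟩ hpq heq => ?_)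
  all_goals
    have hle : p ≤ q := (mem_adjacentPairs.mp hpq).2.2.1.le
    dsimp only
    rw [phiTo_stepSeq_sub hα hαn x hle]
  · exact pow_le_pow_left₀ (norm_nonneg _) (norm_phiTo_apply_le φ hφ _ _) 2
  · dsimp only at heq
    rw [heq, phiTo_self_apply, sub_self, map_zero, norm_zero, zero_pow two_ne_zero]

theorem rhoJ_stepSeq_le (S : Finset ℕ) (hS : S.Nonempty) :
    rhoJ φ (stepSeq φ α x) S hS ≤ rhoJ φ x (S.image α) (hS.image α) := by
  refine Real.sqrt_le_sqrt (add_le_add (sigma2_stepSeq_le hφ hα hαn x S) ?_)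
  rw [Finset.max'_image hα]
  exact pow_le_pow_left₀ (norm_nonneg _) (norm_phiTo_apply_le φ hφ _ _) 2

theorem forall_mem_rhoSet_stepSeq_exists_le :
    ∀ r ∈ rhoSet φ (stepSeq φ α x), ∃ r' ∈ rhoSet φ x, r ≤ r' := by
  rintro _ ⟨S, hS, rfl⟩
  exact ⟨_, ⟨S.image α, hS.image α, rfl⟩, rhoJ_stepSeq_le hφ hα hαn x S hS⟩

end Stepping

theorem rhoSet_nonempty {X : ℕ → Type*} [∀ n, NormedAddCommGroup (X n)]
    [∀ n, NormedSpace ℝ (X n)] (φ : ∀ n, X n →L[ℝ] X (n + 1)) (x : ∀ n, X n) :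
    (rhoSet φ x).Nonempty :=
  ⟨_, {0}, Finset.singleton_nonempty 0, rfl⟩

theorem stmt11_general {X : ℕ → Type*} [∀ n, NormedAddCommGroup (X n)] [∀ n, NormedSpace ℝ (X n)]
    [Subsingleton (X 0)]
    (φ : ∀ n, X n →L[ℝ] X (n + 1)) (hφ : ∀ n, ‖φ n‖ ≤ 1)
    (α : ℕ → ℕ) (hα : Monotone α) (hαn : ∀ n, α n ≤ n) :
    ∀ x : ∀ n, X n, memJhat φ x →
      memJhat φ (stepSeq φ α x) ∧ normJ φ (stepSeq φ α x) ≤ normJ φ x := by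
  intro x hx
  have hdom := forall_mem_rhoSet_stepSeq_exists_le hφ hα hαn x
  refine ⟨Set.Nonempty.mono (upperBounds_subset_of_forall_exists_le hdom) hx, ?_⟩
  exact mul_le_mul_of_nonneg_left
    (csSup_le_csSup_of_forall_exists_le hx (rhoSet_nonempty φ _) hdom) (by positivity)

/-- for a nondecreasing `α` with `α_n ≤ n`, `Q_α` maps `Ĵ(Φ)` into
itself with `‖Q_α(x)‖_J ≤ ‖x‖_J`. -/
theorem stmt11 {X : ℕ → Type*} [∀ n, NormedAddCommGroup (X n)] [∀ n, NormedSpace ℝ (X n)]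
    [∀ n, CompleteSpace (X n)] [Subsingleton (X 0)]
    (φ : ∀ n, X n →L[ℝ] X (n + 1)) (hφ : ∀ n, ‖φ n‖ ≤ 1)
    (α : ℕ → ℕ) (hα : Monotone α) (hαn : ∀ n, α n ≤ n) :
    ∀ x : ∀ n, X n, memJhat φ x →
      memJhat φ (stepSeq φ α x) ∧ normJ φ (stepSeq φ α x) ≤ normJ φ x :=
  stmt11_general φ hφ α hα hαn
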